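/- arXiv:1806.00783 — 5 statements merged into one kernel-verified Lean document; each statement's English description precedes it below -/
import Mathlib

section
/- For every n ≥ 2, every M_n-good digraph is the Hasse diagram of a poset, i.e., it has no directed cycles of positive length and has no edge (a,b) for which there exists a directed path from a to b of length at least 2. Here M_n is the cycling 2-machine with state set {0,…,n}, transitions f(i,(1,2)) = min(i+1,n) for all i, f(i,(2,1)) = i−2 for i ≥ 2, f(0,(2,1)) = f(1,(2,1)) = ∅, and bad set Δ_{{0,…,n}}. -/
/-- A set of `k`-ary edges forms a (k-uniform) directed hypergraph if
no edge has two equal coordinates. -/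
def IsHypergraph {V : Type} {k : ℕ} (E : Set (Fin k → V)) : Prop :=
  ∀ e ∈ E, Function.Injective e

/-- The hypergraph `(V, E)` admits a proper coloring with `m` colors:
on each edge, not all vertices receive the same color.  The chromatic number
is at most `m` iff this holds, and is greater than `m` iff it fails. -/
def Colorable {V : Type} {k : ℕ} (E : Set (Fin k → V)) (m : ℕ) : Prop :=
  ∃ c : V → Fin m, ∀ e ∈ E, ∃ i j : Fin k, c (e i) ≠ c (e j)

/-- The hypergraph `(V, E)` has an `M`-bad cycle of positive length, for the
`k`-machine `M = (S, f, B)`: a cycle `v₀, e₁, v₁, …, e_n, v_n` with `v_n = v₀`,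
each `v_{i-1}, v_i` among the coordinates of `e_i` (witnessed by the trace
`(a, b)`), together with states `s₀, …, s_n` with `s_i ∈ f(s_{i-1}, tr(c,i))`
and `(s₀, s_n) ∈ B`.  `M`-goodness is the negation of this. -/
def HasMBadCycle {V S : Type} {k : ℕ} (E : Set (Fin k → V))
    (f : S → Fin k × Fin k → Set S) (B : Set (S × S)) : Prop :=
  ∃ (n : ℕ) (v : Fin (n+1) → V) (e : Fin n → (Fin k → V)) (s : Fin (n+1) → S),
    0 < n ∧
    v (Fin.last n) = v 0 ∧
    (∀ i : Fin n, e i ∈ E) ∧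
    (∀ i : Fin n, ∃ a b : Fin k,
      e i a = v i.castSucc ∧ e i b = v i.succ ∧ s i.succ ∈ f (s i.castSucc) (a, b)) ∧
    (s 0, s (Fin.last n)) ∈ B

/-- The transition function of the cycling 2-machine `M_n` of Example 2:
states `{0, …, n}`, `f(i,(1,2)) = min(i+1,n)`, `f(i,(2,1)) = i-2` for `i ≥ 2`,
and `f(0,(2,1)) = f(1,(2,1)) = ∅`.  (Coordinates `1, 2` are `0, 1 : Fin 2`.) -/
def MnTrans (n : ℕ) : Fin (n+1) → Fin 2 × Fin 2 → Set (Fin (n+1)) := fun s p =>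
  if p = ((0 : Fin 2), (1 : Fin 2)) then
    {⟨min (s.1 + 1) n, Nat.lt_succ_of_le (Nat.min_le_right _ _)⟩}
  else if p = ((1 : Fin 2), (0 : Fin 2)) then
    (if 2 ≤ s.1 then {⟨s.1 - 2, Nat.lt_of_le_of_lt (Nat.sub_le _ _) s.2⟩} else ∅)
  else ∅

/-- `x` is joined to `y` by an edge of the digraph `(V, E)`. -/
def Adj {V : Type} (E : Set (Fin 2 → V)) (x y : V) : Prop :=
  ∃ e ∈ E, e 0 = x ∧ e 1 = y

/-- The digraph `(V, E)` is the Hasse diagram of a poset: it has no directed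
cycles of positive length, and no edge `(a, b)` for which there is a directed
path from `a` to `b` of length at least 2. -/
def IsHasseDiagram {V : Type} (E : Set (Fin 2 → V)) : Prop :=
  (¬ ∃ (n : ℕ) (v : Fin (n+1) → V), 0 < n ∧ v (Fin.last n) = v 0 ∧
      ∀ i : Fin n, Adj E (v i.castSucc) (v i.succ)) ∧
  (¬ ∃ a b : V, Adj E a b ∧ ∃ (n : ℕ) (v : Fin (n+1) → V), 2 ≤ n ∧
      v 0 = a ∧ v (Fin.last n) = b ∧
      ∀ i : Fin n, Adj E (v i.castSucc) (v i.succ))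

/-- For every `n ≥ 2`, every `M_n`-good digraph is the
Hasse diagram of a poset. -/
theorem Mn_good_implies_hasse_diagram
    (n : ℕ) (hn : 2 ≤ n) {V : Type} (E : Set (Fin 2 → V))
    (hE : IsHypergraph E)
    (hgood : ¬ HasMBadCycle E (MnTrans n) (Set.diagonal (Fin (n+1)))) :
    IsHasseDiagram E := by
  constructor
  · rintro ⟨m, v, hm, hvc, hadj⟩
    apply hgood
    refine ⟨m, v, fun i => (hadj i).choose, fun _ => ⟨n, Nat.lt_succ_self n⟩,
      hm, hvc, fun i => (hadj i).choose_spec.1,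
      fun i => ⟨0, 1, (hadj i).choose_spec.2.1, (hadj i).choose_spec.2.2, ?_⟩, rfl⟩
    simp [MnTrans, Fin.ext_iff]
  · rintro ⟨a, b, ⟨e, heE, he0, he1⟩, m, v, hm2, hv0, hvl, hadj⟩
    apply hgood
    refine ⟨m+1,
      (fun i => if h : i.val < m+1 then v ⟨i.val, h⟩ else a),
      (fun i => if h : i.val < m then (hadj ⟨i.val, h⟩).choose else e),
      (fun i => if _ : i.val ≤ m then ⟨min (n-2+i.val) n, by omega⟩ else ⟨n-2, by omega⟩),
      by omega, ?_, ?_, ?_, ?_⟩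
    · beta_reduce
      rw [dif_neg (by simp), dif_pos (by simp)]
      exact hv0.symm
    · intro i
      beta_reduce
      by_cases h : i.val < m
      · rw [dif_pos h]; exact (hadj ⟨i.val, h⟩).choose_spec.1
      · rw [dif_neg h]; exact heE
    · intro i
      by_cases h : i.val < m
      · refine ⟨0, 1, ?_, ?_, ?_⟩
        · beta_reduce
          rw [dif_pos h, dif_pos (show i.castSucc.val < m+1 by simp; omega)]
          exact (hadj ⟨i.val, h⟩).choose_spec.2.1
        · beta_reduce
          rw [dif_pos h, dif_pos (show i.succ.val < m+1 by simp; omega)]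
          exact (hadj ⟨i.val, h⟩).choose_spec.2.2
        · beta_reduce
          rw [dif_pos (show i.castSucc.val ≤ m by simp; omega),
            dif_pos (show i.succ.val ≤ m by simp; omega)]
          simp only [MnTrans, if_pos trivial, Set.mem_singleton_iff, Fin.mk.injEq,
            Fin.coe_castSucc, Fin.val_succ]
          omega
      · have hi : i.val = m := by omega
        refine ⟨1, 0, ?_, ?_, ?_⟩
        · beta_reduce
          rw [dif_neg h, dif_pos (show i.castSucc.val < m+1 by simp; omega), he1, ← hvl]
          congr 1
          simp [Fin.ext_iff, hi]
        · beta_reduce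
          rw [dif_neg h, dif_neg (show ¬ i.succ.val < m+1 by simp; omega)]
          exact he0
        · beta_reduce
          rw [dif_pos (show i.castSucc.val ≤ m by simp; omega),
            dif_neg (show ¬ i.succ.val ≤ m by simp; omega)]
          simp only [MnTrans]
          rw [if_neg (by decide), if_pos trivial,
            if_pos (show 2 ≤ min (n-2+(i.castSucc).val) n by simp [hi]; omega)]
          simp only [Set.mem_singleton_iff, Fin.mk.injEq, Fin.coe_castSucc]
          omega
    · show _ = _
      beta_reduce
      rw [dif_pos (by simp), dif_neg (by simp)]
      simp only [Fin.mk.injEq, Fin.val_zero]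
      omega
end

section
/- For every natural number n, there exist M_n-good digraphs of arbitrarily large chromatic number, i.e., for every m there is a finite M_n-good digraph with chromatic number greater than m. Here M_n is the cycling 2-machine with state set {0,…,n}, transitions f(i,(1,2)) = min(i+1,n) for all i, f(i,(2,1)) = i−2 for i ≥ 2, f(0,(2,1)) = f(1,(2,1)) = ∅, and bad set Δ_{{0,…,n}}. -/
namespace MnAux

/-- Vertices of the `K`-uniform shift digraph on ground set `Fin N`:
strictly increasing `K`-tuples. -/
def SV (N K : ℕ) := {t : Fin K → Fin N // StrictMono t}

instance (N K : ℕ) : Finite (SV N K) := by unfold SV; infer_instance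

/-- Edges of the `K`-uniform shift digraph: an edge goes from the initial
`K`-segment of a strictly increasing `(K+1)`-chain to its final `K`-segment. -/
def SE (N K : ℕ) : Set (Fin 2 → SV N K) :=
  {e | ∃ D : Fin (K+1) → Fin N, StrictMono D ∧
    (e 0).val = D ∘ Fin.castSucc ∧ (e 1).val = D ∘ Fin.succ}

/-- The potential showing the machine-product digraph is acyclic. -/
def phi (n N : ℕ) (t : Fin (n+2) → Fin N) (s : ℕ) : ℤ :=
  2*(s:ℤ) - 3*((s/2 : ℕ) : ℤ) - 3*((t ⟨n+1 - s/2, by omega⟩).val : ℤ)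

lemma phi_eval {n N : ℕ} (t : Fin (n+2) → Fin N) (s j : ℕ) (h : s/2 = j)
    (hj : n+1-j < n+2) :
    phi n N t s = 2*(s:ℤ) - 3*(j:ℤ) - 3*((t ⟨n+1-j, hj⟩).val : ℤ) := by
  subst h; rfl

lemma app_mk_eq {M N : ℕ} (D : Fin M → Fin N) (x y : ℕ) (hx : x < M) (hy : y < M)
    (h : x = y) : D ⟨x, hx⟩ = D ⟨y, hy⟩ := by subst h; rfl

lemma comp_succ_mk {M N : ℕ} (D : Fin (M+1) → Fin N) (x : ℕ) (hx : x < M) :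
    (D ∘ Fin.succ) ⟨x, hx⟩ = D ⟨x+1, by omega⟩ := by
  show D (Fin.succ ⟨x, hx⟩) = _
  rw [Fin.succ_mk]

lemma comp_castSucc_mk {M N : ℕ} (D : Fin (M+1) → Fin N) (x : ℕ) (hx : x < M) :
    (D ∘ Fin.castSucc) ⟨x, hx⟩ = D ⟨x, by omega⟩ := by
  show D (Fin.castSucc ⟨x, hx⟩) = _
  rw [Fin.castSucc_mk]

lemma phi_forward {n N : ℕ} (D : Fin (n+3) → Fin N) (hD : StrictMono D)
    (s : ℕ) (hs : s ≤ n) :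
    phi n N (D ∘ Fin.succ) (min (s+1) n) ≤ phi n N (D ∘ Fin.castSucc) s - 1 := by
  have hmono : ∀ (x : ℕ) (hx : x + 1 < n + 3),
      ((D ⟨x, by omega⟩).val : ℤ) + 1 ≤ ((D ⟨x+1, hx⟩).val : ℤ) := by
    intro x hx
    have h1 := hD (show (⟨x, by omega⟩ : Fin (n+3)) < ⟨x+1, hx⟩ from Fin.mk_lt_mk.mpr (by omega))
    have h2 := (Fin.lt_def).mp h1
    omega
  rcases Nat.lt_or_ge s n with h | h
  · have hmin : min (s+1) n = s + 1 := by omega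
    rw [hmin]
    rcases Nat.even_or_odd s with ⟨a, ha⟩ | ⟨a, ha⟩
    · -- `s` even : same index, strict increase of the coordinate
      rw [phi_eval (D ∘ Fin.succ) (s+1) (s/2) (by omega) (by omega),
          phi_eval (D ∘ Fin.castSucc) s (s/2) rfl (by omega),
          comp_succ_mk, comp_castSucc_mk]
      have := hmono (n+1 - s/2) (by omega)
      omega
    · -- `s` odd : the index shifts, the coordinate is unchanged
      rw [phi_eval (D ∘ Fin.succ) (s+1) (s/2+1) (by omega) (by omega),
          phi_eval (D ∘ Fin.castSucc) s (s/2) rfl (by omega),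
          comp_succ_mk, comp_castSucc_mk,
          app_mk_eq D (n+1-(s/2+1)+1) (n+1-s/2) (by omega) (by omega) (by omega)]
      push_cast
      omega
  · -- cap case : `s = n`, `min (s+1) n = s`
    have hmin : min (s+1) n = s := by omega
    rw [hmin,
        phi_eval (D ∘ Fin.succ) s (s/2) rfl (by omega),
        phi_eval (D ∘ Fin.castSucc) s (s/2) rfl (by omega),
        comp_succ_mk, comp_castSucc_mk]
    have := hmono (n+1 - s/2) (by omega)
    omega

lemma phi_backward {n N : ℕ} (D : Fin (n+3) → Fin N)
    (s : ℕ) (h2 : 2 ≤ s) (hs : s ≤ n) :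
    phi n N (D ∘ Fin.castSucc) (s-2) ≤ phi n N (D ∘ Fin.succ) s - 1 := by
  have hj : 1 ≤ s/2 := by omega
  rw [phi_eval (D ∘ Fin.castSucc) (s-2) (s/2-1) (by omega) (by omega),
      phi_eval (D ∘ Fin.succ) s (s/2) rfl (by omega),
      comp_succ_mk, comp_castSucc_mk,
      app_mk_eq D (n+1-(s/2-1)) (n+1-s/2+1) (by omega) (by omega) (by omega)]
  push_cast
  omega

/-- The `(n+2)`-uniform shift digraph is `M_n`-good. -/
lemma good (n N : ℕ) :
    ¬ HasMBadCycle (SE N (n+2)) (MnTrans n) (Set.diagonal (Fin (n+1))) := by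
  rintro ⟨L, v, e, s, hL, hvc, hE, hstep, hB⟩
  have key : ∀ i : Fin L,
      phi n N (v i.succ).val (s i.succ).val ≤ phi n N (v i.castSucc).val (s i.castSucc).val - 1 := by
    intro i
    obtain ⟨a, b, h1, h2, hs⟩ := hstep i
    obtain ⟨D, hD, hD0, hD1⟩ := hE i
    have hsle : (s i.castSucc).val ≤ n := by omega
    by_cases hab : (a, b) = ((0 : Fin 2), (1 : Fin 2))
    · obtain ⟨ha, hb⟩ := Prod.mk.injEq .. ▸ hab
      subst ha hb
      have hs' : s i.succ = ⟨min ((s i.castSucc).val + 1) n,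
          Nat.lt_succ_of_le (Nat.min_le_right _ _)⟩ := by
        simpa [MnTrans] using hs
      have hv0 : (v i.castSucc).val = D ∘ Fin.castSucc := by rw [← h1]; exact hD0
      have hv1 : (v i.succ).val = D ∘ Fin.succ := by rw [← h2]; exact hD1
      have hsv : (s i.succ).val = min ((s i.castSucc).val + 1) n := by rw [hs']
      rw [hv0, hv1, hsv]
      exact phi_forward D hD _ hsle
    · by_cases hab2 : (a, b) = ((1 : Fin 2), (0 : Fin 2))
      · obtain ⟨ha, hb⟩ := Prod.mk.injEq .. ▸ hab2
        subst ha hb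
        have hs2 : 2 ≤ (s i.castSucc).val := by
          by_contra hlt
          simp [MnTrans, hlt] at hs
        have hs' : s i.succ = ⟨(s i.castSucc).val - 2,
            Nat.lt_of_le_of_lt (Nat.sub_le _ _) (s i.castSucc).2⟩ := by
          simpa [MnTrans, hs2] using hs
        have hv0 : (v i.castSucc).val = D ∘ Fin.succ := by rw [← h1]; exact hD1
        have hv1 : (v i.succ).val = D ∘ Fin.castSucc := by rw [← h2]; exact hD0
        have hsv : (s i.succ).val = (s i.castSucc).val - 2 := by rw [hs']
        rw [hv0, hv1, hsv]
        exact phi_backward D _ hs2 hsle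
      · exfalso
        simp [MnTrans, hab, hab2] at hs
  -- telescoping the potential along the cycle
  have tele : ∀ i : Fin (L+1),
      phi n N (v i).val (s i).val ≤ phi n N (v 0).val (s 0).val - (i.val : ℤ) := by
    intro i
    induction i using Fin.induction with
    | zero => simp
    | succ i ih =>
        have := key i
        have hsv : (i.succ.val : ℤ) = (i.castSucc.val : ℤ) + 1 := by
          simp [Fin.val_succ]
        rw [hsv]
        omega
  have hfin := tele (Fin.last L)
  rw [hvc] at hfin
  rw [show s 0 = s (Fin.last L) from hB] at hfin
  rw [Fin.val_last] at hfin
  have hL1 : (1:ℤ) ≤ (L:ℤ) := by exact_mod_cast hL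
  linarith

/-- Tower function: iterated exponentials. -/
def tw : ℕ → ℕ → ℕ
  | 0, c => c
  | k+1, c => tw k (2^c)

/-- The shift digraph of uniformity `k+1` on ground set `Fin N` has chromatic
number tending to infinity with `N`: a proper coloring with `C` colors forces
`N ≤ tw k |C|`. -/
lemma chrom : ∀ (k N : ℕ) (C : Type) (_ : Fintype C) (c : SV N (k+1) → C),
    (∀ e ∈ SE N (k+1), c (e 0) ≠ c (e 1)) → N ≤ tw k (Fintype.card C) := by
  intro k
  induction k with
  | zero =>
    intro N C hC c hproper
    have hmono1 : ∀ a : Fin N, StrictMono (fun _ : Fin 1 => a) := by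
      intro a i j hij
      exact absurd (Subsingleton.elim i j) hij.ne
    set ι : Fin N → C := fun a => c ⟨fun _ => a, hmono1 a⟩ with hι
    have hinj : Function.Injective ι := by
      have main : ∀ x y : Fin N, x < y → ι x = ι y → False := by
        intro x y hlt heq
        set D : Fin 2 → Fin N := ![x, y] with hDdef
        have hD : StrictMono D := by
          rw [Fin.strictMono_iff_lt_succ]
          intro i
          have hi : i = 0 := Subsingleton.elim i 0
          subst hi
          simpa [hDdef] using hlt
        set u : SV N 1 := ⟨D ∘ Fin.castSucc, hD.comp Fin.strictMono_castSucc⟩ with hu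
        set w : SV N 1 := ⟨D ∘ Fin.succ, hD.comp Fin.strictMono_succ⟩ with hw
        have huv : u = ⟨fun _ => x, hmono1 x⟩ := by
          apply Subtype.ext
          funext i
          have hi : i = 0 := Subsingleton.elim i 0
          subst hi
          show D (Fin.castSucc 0) = x
          simp [hDdef]
        have hwv : w = ⟨fun _ => y, hmono1 y⟩ := by
          apply Subtype.ext
          funext i
          have hi : i = 0 := Subsingleton.elim i 0
          subst hi
          show D (Fin.succ 0) = y
          simp [hDdef]
        have hmem : ![u, w] ∈ SE N 1 := ⟨D, hD, by simp [hu], by simp [hw]⟩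
        have hne := hproper _ hmem
        simp only [Matrix.cons_val_zero, Matrix.cons_val_one, Matrix.head_cons] at hne
        rw [huv, hwv] at hne
        exact hne heq
      intro x y hxy
      by_contra hne
      rcases lt_trichotomy x y with h | h | h
      · exact main x y h hxy
      · exact hne h
      · exact main y x h hxy.symm
    have hcard := Fintype.card_le_of_injective ι hinj
    rw [Fintype.card_fin] at hcard
    exact hcard
  | succ k ih =>
    intro N C hC c hproper
    classical
    haveI : Fintype (SV N (k+2)) := Fintype.ofFinite _
    set init : SV N (k+2) → SV N (k+1) :=
      fun w => ⟨w.val ∘ Fin.castSucc, w.2.comp Fin.strictMono_castSucc⟩ with hinit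
    set c' : SV N (k+1) → Finset C :=
      fun u => Finset.image c (Finset.univ.filter (fun w => init w = u)) with hc'
    have hproper' : ∀ e ∈ SE N (k+1), c' (e 0) ≠ c' (e 1) := by
      rintro e ⟨D, hD, hD0, hD1⟩ hcc
      set w : SV N (k+2) := ⟨D, hD⟩ with hwdef
      have hmem0 : c w ∈ c' (e 0) := by
        rw [hc']
        apply Finset.mem_image_of_mem
        rw [Finset.mem_filter]
        exact ⟨Finset.mem_univ _, Subtype.ext (by rw [hD0])⟩
      rw [hcc] at hmem0
      rw [hc'] at hmem0
      obtain ⟨w₂, hw₂mem, hcw₂⟩ := Finset.mem_image.mp hmem0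
      have hw₂init : w₂.val ∘ Fin.castSucc = D ∘ Fin.succ := by
        have h := (Finset.mem_filter.mp hw₂mem).2
        have h2 : (init w₂).val = (e 1).val := by rw [h]
        rw [hD1] at h2
        exact h2
      set z : Fin N := w₂.val (Fin.last (k+1)) with hz
      set F : Fin (k+3) → Fin N := Fin.snoc D z with hF
      have hFcast : ∀ i : Fin (k+2), F i.castSucc = D i := by
        intro i; rw [hF]; exact Fin.snoc_castSucc _ _ _
      have hFsucc : ∀ i : Fin (k+2), F i.succ = w₂.val i := by
        intro i
        induction i using Fin.lastCases with
        | last => rw [Fin.succ_last, hF, Fin.snoc_last, hz]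
        | cast j =>
          rw [Fin.succ_castSucc, hFcast]
          have h := congrFun hw₂init j
          exact h.symm
      have hFmono : StrictMono F := by
        rw [Fin.strictMono_iff_lt_succ]
        intro i
        rw [hFsucc i]
        induction i using Fin.lastCases with
        | last =>
          rw [hFcast]
          have h1 : D (Fin.last (k+1)) = w₂.val ((Fin.last k).castSucc) := by
            have h := congrFun hw₂init (Fin.last k)
            simp only [Function.comp_apply] at h
            rw [Fin.succ_last] at h
            exact h.symm
          rw [h1]
          exact w₂.2 (Fin.castSucc_lt_last _)
        | cast j =>
          rw [hFcast]
          have h := congrFun hw₂init j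
          rw [show ((w₂.val ∘ Fin.castSucc) j) = w₂.val j.castSucc from rfl] at h
          rw [show ((D ∘ Fin.succ) j) = D j.succ from rfl] at h
          rw [h]
          exact hD (Fin.castSucc_lt_succ : j.castSucc < j.succ)
      have hedge : ![w, w₂] ∈ SE N (k+2) := by
        refine ⟨F, hFmono, ?_, ?_⟩
        · simp only [Matrix.cons_val_zero]
          funext i
          exact (hFcast i).symm
        · simp only [Matrix.cons_val_one, Matrix.head_cons]
          funext i
          exact (hFsucc i).symm
      have hne := hproper _ hedge
      simp only [Matrix.cons_val_zero, Matrix.cons_val_one, Matrix.head_cons] at hne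
      exact hne hcw₂.symm
    have hres := ih N (Finset C) inferInstance c' hproper'
    rw [Fintype.card_finset] at hres
    simpa [tw] using hres

end MnAux

/-- For every natural number `n`, there exist `M_n`-good
digraphs of arbitrarily large chromatic number: for every `m` there is a
finite `M_n`-good digraph with chromatic number greater than `m`. -/
theorem Mn_good_digraphs_unbounded_chromatic (n : ℕ) :
    ∀ m : ℕ, ∃ (V : Type) (_ : Fintype V) (E : Set (Fin 2 → V)),
      IsHypergraph E ∧ ¬ HasMBadCycle E (MnTrans n) (Set.diagonal (Fin (n+1))) ∧
      ¬ Colorable E m := by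
  intro m
  classical
  set N := MnAux.tw (n+1) m + 1 with hN
  refine ⟨MnAux.SV N (n+2), Fintype.ofFinite _, MnAux.SE N (n+2), ?_, MnAux.good n N, ?_⟩
  · -- hypergraph condition
    rintro e ⟨D, hD, hD0, hD1⟩
    have hne : e 0 ≠ e 1 := by
      intro hcontra
      have hvals := congrFun (congrArg Subtype.val hcontra) (Fin.last (n+1))
      rw [hD0, hD1] at hvals
      simp only [Function.comp_apply] at hvals
      have hlt : (Fin.last (n+1)).castSucc < (Fin.last (n+1)).succ := Fin.castSucc_lt_succ
      exact absurd hvals (hD hlt).ne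
    intro i j hij
    fin_cases i <;> fin_cases j <;> simp_all
  · -- not m-colorable
    rintro ⟨c, hc⟩
    have hproper : ∀ e ∈ MnAux.SE N (n+2), c (e 0) ≠ c (e 1) := by
      intro e he
      obtain ⟨i, j, hij⟩ := hc e he
      intro heq
      have hall : ∀ x : Fin 2, c (e x) = c (e 0) := by
        intro x
        fin_cases x
        · rfl
        · exact heq.symm
      rw [hall i, hall j] at hij
      exact hij rfl
    have hres := MnAux.chrom (n+1) N (Fin m) inferInstance c hproper
    rw [Fintype.card_fin] at hres
    omega
end

section
/- Let D be the digraph with vertex set {(a,b) ∈ ℕ² : a < b} and an edge from (a,b) to (b,c) whenever a < b < c. Then: (i) D has infinite chromatic number, i.e., for every coloring of its vertices with finitely many colors there is an edge whose two endpoints receive the same color; and (ii) D has no odd alternating cycle, i.e., there is no cycle c = (v₀, e₁, v₁, …, e_n, v_n) with v_n = v₀, n odd, such that for all but at most one index i (taken cyclically modulo n) the edges e_i and e_{i+1} are traversed in opposite directions (one forward and one backward). -/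
/-- The cyclic successor of an index `i : Fin n` (indices of edges of a cycle
are taken modulo `n`). -/
def nextIdx {n : ℕ} (i : Fin n) : Fin n := ⟨(i.1 + 1) % n, Nat.mod_lt _ i.pos⟩

/-- The vertex set of the digraph `D`: pairs `(a, b) ∈ ℕ²` with `a < b`. -/
abbrev PairVertex : Type := {p : ℕ × ℕ // p.1 < p.2}

/-- The edge set of the digraph `D`: an edge from `(a, b)` to `(b, c)`
whenever `a < b < c`. -/
def pairEdges : Set (PairVertex × PairVertex) :=
  {q | (q.1 : ℕ × ℕ).2 = (q.2 : ℕ × ℕ).1}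

lemma succ_mod_eq (n x : ℕ) : (x % n + 1) % n = (x + 1) % n := by
  conv_rhs => rw [Nat.add_mod]
  conv_lhs => rw [Nat.add_mod]
  simp

lemma aux_const {n : ℕ} (g : Fin n → ℕ) (i₀ : Fin n)
    (h : ∀ j, j ≠ i₀ → g (nextIdx j) = g j) : g i₀ = g (nextIdx i₀) := by
  have hn : 0 < n := i₀.pos
  have aux : ∀ k, k < n → g ⟨(i₀.1 + 1 + k) % n, Nat.mod_lt _ hn⟩ = g (nextIdx i₀) := by
    intro k
    induction k with
    | zero => intro _; rfl
    | succ k ih =>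
      intro hk
      have hk' : k < n := Nat.lt_of_succ_lt hk
      have hne : (⟨(i₀.1 + 1 + k) % n, Nat.mod_lt _ hn⟩ : Fin n) ≠ i₀ := by
        intro he
        have hval : (i₀.1 + 1 + k) % n = i₀.1 := congrArg Fin.val he
        have ha := i₀.isLt
        rcases Nat.lt_or_ge (i₀.1 + 1 + k) n with h1 | h1
        · rw [Nat.mod_eq_of_lt h1] at hval; omega
        · have h3 : (i₀.1 + 1 + k) % n = i₀.1 + 1 + k - n := by
            rw [Nat.mod_eq_sub_mod h1, Nat.mod_eq_of_lt (by omega)]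
          rw [h3] at hval; omega
      have step := h _ hne
      have hidx : nextIdx (⟨(i₀.1 + 1 + k) % n, Nat.mod_lt _ hn⟩ : Fin n)
          = ⟨(i₀.1 + 1 + (k+1)) % n, Nat.mod_lt _ hn⟩ := by
        apply Fin.ext
        show ((i₀.1 + 1 + k) % n + 1) % n = (i₀.1 + 1 + (k+1)) % n
        have : i₀.1 + 1 + (k+1) = (i₀.1 + 1 + k) + 1 := by omega
        rw [this, succ_mod_eq]
      rw [hidx] at step
      rw [step]; exact ih hk'
  have hfin := aux (n-1) (by omega)
  have hix : (⟨(i₀.1 + 1 + (n-1)) % n, Nat.mod_lt _ hn⟩ : Fin n) = i₀ := by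
    apply Fin.ext
    show (i₀.1 + 1 + (n-1)) % n = i₀.1
    have h1 : i₀.1 + 1 + (n-1) = i₀.1 + n := by omega
    rw [h1, Nat.add_mod_right, Nat.mod_eq_of_lt i₀.isLt]
  rw [hix] at hfin
  exact hfin

lemma aux_parity {n : ℕ} (hn : 0 < n) (hodd : Odd n) (d : Fin n → Bool)
    (h : ∀ j, d (nextIdx j) = !(d j)) : False := by
  have aux : ∀ k, d ⟨k % n, Nat.mod_lt _ hn⟩ = xor (decide (k % 2 = 1)) (d ⟨0, hn⟩) := by
    intro k; induction k with
    | zero => simp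
    | succ k ih =>
      have hidx : (⟨(k+1) % n, Nat.mod_lt _ hn⟩ : Fin n) = nextIdx ⟨k % n, Nat.mod_lt _ hn⟩ := by
        apply Fin.ext
        show (k+1) % n = (k % n + 1) % n
        rw [succ_mod_eq]
      rw [hidx, h, ih]
      by_cases hk : k % 2 = 1
      · have hk1 : (k+1) % 2 = 0 := by omega
        simp [hk, hk1]
      · have hk1 : (k+1) % 2 = 1 := by omega
        simp [hk, hk1]
  have h1 := aux n
  have hnn : (⟨n % n, Nat.mod_lt _ hn⟩ : Fin n) = ⟨0, hn⟩ := Fin.ext (Nat.mod_self n)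
  rw [hnn] at h1
  have h2 : n % 2 = 1 := Nat.odd_iff.mp hodd
  simp [h2] at h1

/-- The digraph `D` with vertices `{(a,b) ∈ ℕ² : a < b}` and
edges `(a,b) → (b,c)` for `a < b < c` satisfies: (i) `D` has infinite
chromatic number (every coloring with finitely many colors has a
monochromatic edge); and (ii) `D` has no odd alternating cycle, i.e. no cycle
of odd length `n` such that for all but at most one index `i` (cyclically mod
`n`) the edges `e_i` and `e_{i+1}` are traversed in opposite directions. -/
theorem pair_digraph_infinite_chromatic_and_no_odd_alternating_cycle :
    (∀ (C : Type) [Finite C] (col : PairVertex → C),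
      ∃ q ∈ pairEdges, col q.1 = col q.2) ∧
    ¬ ∃ (n : ℕ) (v : Fin (n+1) → PairVertex)
        (es : Fin n → PairVertex × PairVertex) (d : Fin n → Bool),
        Odd n ∧
        v (Fin.last n) = v 0 ∧
        (∀ i : Fin n, es i ∈ pairEdges) ∧
        (∀ i : Fin n, if d i = true then es i = (v i.castSucc, v i.succ)
          else es i = (v i.succ, v i.castSucc)) ∧
        (Finset.univ.filter (fun i : Fin n => d i = d (nextIdx i))).card ≤ 1 := by
  constructor
  · -- Part (i): infinite chromatic number
    intro C _ col
    by_contra hcon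
    push_neg at hcon
    set g : ℕ → Set C := fun b => {x | ∃ a, ∃ hab : a < b, col ⟨(a, b), hab⟩ = x} with hg
    obtain ⟨b, c, hbc, hgbc⟩ := Finite.exists_ne_map_eq_of_infinite g
    -- WLOG b < c
    wlog hlt : b < c generalizing b c
    · exact this c b hbc.symm hgbc.symm (by omega)
    have hmem : col ⟨(b, c), hlt⟩ ∈ g c := ⟨b, hlt, rfl⟩
    rw [← hgbc] at hmem
    obtain ⟨a, hab, hcol⟩ := hmem
    have hedge : ((⟨(a, b), hab⟩ : PairVertex), (⟨(b, c), hlt⟩ : PairVertex)) ∈ pairEdges := rfl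
    exact hcon _ hedge hcol
  · -- Part (ii): no odd alternating cycle
    rintro ⟨n, v, es, d, hodd, hvlast, hmem, hdir, hcard⟩
    have hn : 0 < n := hodd.pos
    set f : Fin n → ℕ := fun j => ((es j).1 : ℕ × ℕ).2 with hf
    -- the junction vertex
    have hjunction : ∀ i : Fin n, v i.succ = v (nextIdx i).castSucc := by
      intro i
      by_cases h : i.1 + 1 < n
      · congr 1
        apply Fin.ext
        show i.1 + 1 = (i.1 + 1) % n
        rw [Nat.mod_eq_of_lt h]
      · have h1 : i.1 + 1 = n := by have := i.isLt; omega
        have hsucc : i.succ = Fin.last n := by apply Fin.ext; simpa using h1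
        have h2 : nextIdx i = ⟨0, hn⟩ := by apply Fin.ext; show (i.1+1) % n = 0; simp [h1]
        rw [hsucc, hvlast, h2]
        congr 1
    have hf1 : ∀ i : Fin n,
        f i = if d i then ((v i.succ : ℕ × ℕ)).1 else ((v i.succ : ℕ × ℕ)).2 := by
      intro i
      have hm := hmem i
      have hd := hdir i
      by_cases h : d i = true
      · rw [if_pos h] at hd
        rw [h, if_pos rfl]
        have : ((es i).1 : ℕ × ℕ).2 = ((es i).2 : ℕ × ℕ).1 := hm
        rw [hf]; dsimp only; rw [this, hd]
      · rw [if_neg h] at hd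
        rw [Bool.not_eq_true] at h
        rw [h, if_neg (by simp)]
        rw [hf]; dsimp only; rw [hd]
    have hf2 : ∀ i : Fin n,
        f (nextIdx i) = if d (nextIdx i) then ((v i.succ : ℕ × ℕ)).2
          else ((v i.succ : ℕ × ℕ)).1 := by
      intro i
      set j := nextIdx i with hj
      have hw : v i.succ = v j.castSucc := hjunction i
      have hm := hmem j
      have hd := hdir j
      by_cases h : d j = true
      · rw [if_pos h] at hd
        rw [h, if_pos rfl]
        rw [hf]; dsimp only; rw [hd, hw]
      · rw [if_neg h] at hd
        rw [Bool.not_eq_true] at h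
        rw [h, if_neg (by simp)]
        have : ((es j).1 : ℕ × ℕ).2 = ((es j).2 : ℕ × ℕ).1 := hm
        rw [hf]; dsimp only; rw [this, hd, hw]
    have hkey : ∀ i : Fin n, (d i = d (nextIdx i)) ↔ f i ≠ f (nextIdx i) := by
      intro i
      have hlt : ((v i.succ : ℕ × ℕ)).1 < ((v i.succ : ℕ × ℕ)).2 := (v i.succ).2
      rw [hf1 i, hf2 i]
      cases h1 : d i <;> cases h2 : d (nextIdx i) <;> simp <;> omega
    set S := Finset.univ.filter (fun i : Fin n => d i = d (nextIdx i)) with hS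
    by_cases hSne : S.Nonempty
    · obtain ⟨i₀, hi₀⟩ := hSne
      have huniq : ∀ j ∈ S, j = i₀ := fun j hj => Finset.card_le_one.mp hcard j hj i₀ hi₀
      have hconst : ∀ j, j ≠ i₀ → f (nextIdx j) = f j := by
        intro j hj
        have hjS : j ∉ S := fun h => hj (huniq j h)
        have : ¬ (d j = d (nextIdx j)) := by
          intro h; exact hjS (Finset.mem_filter.mpr ⟨Finset.mem_univ j, h⟩)
        have := (not_iff_not.mpr (hkey j)).mp this
        rw [not_not] at this
        exact this.symm
      have hcc := aux_const f i₀ hconst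
      have hdeq : d i₀ = d (nextIdx i₀) := (Finset.mem_filter.mp hi₀).2
      exact (hkey i₀).mp hdeq hcc
    · have hflip : ∀ j, d (nextIdx j) = !(d j) := by
        intro j
        have hjS : j ∉ S := fun h => hSne ⟨j, h⟩
        have : ¬ (d j = d (nextIdx j)) := by
          intro h; exact hjS (Finset.mem_filter.mpr ⟨Finset.mem_univ j, h⟩)
        cases h1 : d j <;> cases h2 : d (nextIdx j) <;> simp_all
      exact aux_parity hn hodd d hflip
end

section
/- Let D be the digraph whose vertex set is the set of ordered pairs (A,B) of finite subsets of ℕ with A ⊄ B and B ⊄ A, with an edge from (A,B) to (B,C) whenever A ⊊ C. Then: (i) D has infinite chromatic number, i.e., for every coloring of its vertices with finitely many colors there is an edge whose two endpoints receive the same color; and (ii) D has no cycle c = (v₀, e₁, v₁, …, e_n, v_n) with v_n = v₀ of odd length n such that every even-numbered edge e₂, e₄, …, e_{n−1} is traversed in the forward direction. -/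
/-- The vertex set of the digraph `D`: ordered pairs `(A, B)` of finite
subsets of `ℕ` with `A ⊈ B` and `B ⊈ A`. -/
abbrev IncompPair : Type := {p : Finset ℕ × Finset ℕ // ¬ p.1 ⊆ p.2 ∧ ¬ p.2 ⊆ p.1}

/-- The edge set of the digraph `D`: an edge from `(A, B)` to `(B, C)`
whenever `A ⊊ C`. -/
def incompEdges : Set (IncompPair × IncompPair) :=
  {q | (q.1 : Finset ℕ × Finset ℕ).2 = (q.2 : Finset ℕ × Finset ℕ).1 ∧
       (q.1 : Finset ℕ × Finset ℕ).1 ⊂ (q.2 : Finset ℕ × Finset ℕ).2}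

/-- Auxiliary family of finite sets: `Aset i j = [0, 2i] ∪ {2j+1}`. -/
def Aset (i j : ℕ) : Finset ℕ := Finset.range (2*i+1) ∪ {2*j+1}

lemma mem_Aset {x : ℕ} (i j : ℕ) : x ∈ Aset i j ↔ x < 2*i+1 ∨ x = 2*j+1 := by
  simp [Aset]; exact or_comm

lemma Aset_ssubset {i j k l : ℕ} (hij : i < j) (hjk : j < k) (hkl : k < l) :
    Aset i j ⊂ Aset k l := by
  rw [Finset.ssubset_def]
  constructor
  · intro x hx
    rw [mem_Aset] at *
    omega
  · intro h
    have h1 : 2*k ∈ Aset k l := by rw [mem_Aset]; omega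
    have h2 := h h1
    rw [mem_Aset] at h2
    omega

lemma Aset_incomp {i j k : ℕ} (hij : i < j) (hjk : j < k) :
    ¬ Aset i j ⊆ Aset j k ∧ ¬ Aset j k ⊆ Aset i j := by
  constructor
  · intro h
    have h1 : 2*j+1 ∈ Aset i j := by rw [mem_Aset]; omega
    have h2 := h h1
    rw [mem_Aset] at h2
    omega
  · intro h
    have h1 : 2*k+1 ∈ Aset j k := by rw [mem_Aset]; omega
    have h2 := h h1
    rw [mem_Aset] at h2
    omega

/-- The vertex `(Aset i j, Aset j k)` of `D`, for `i < j < k` (junk otherwise). -/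
noncomputable def vertD (i j k : ℕ) : IncompPair :=
  if h : i < j ∧ j < k then ⟨(Aset i j, Aset j k), Aset_incomp h.1 h.2⟩
  else ⟨({0}, {1}), by decide⟩

lemma vertD_eq {i j k : ℕ} (hij : i < j) (hjk : j < k) :
    vertD i j k = ⟨(Aset i j, Aset j k), Aset_incomp hij hjk⟩ := by
  simp [vertD, hij, hjk]

set_option maxHeartbeats 1600000 in
/-- The digraph `D` on ordered pairs `(A, B)` of finite
subsets of `ℕ` with `A ⊈ B`, `B ⊈ A`, and edges `(A,B) → (B,C)` for `A ⊊ C`,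
satisfies: (i) `D` has infinite chromatic number (every coloring with finitely
many colors has a monochromatic edge); and (ii) `D` has no odd cycle such
that every even-numbered edge `e₂, e₄, …, e_{n-1}` is traversed in the
forward direction.  (Edges are indexed `e₁, …, e_n`; edge `e_{i+1}`
corresponds to index `i : Fin n`, so the even-numbered edges are those with
`i.1 % 2 = 1`.) -/
theorem incomparable_pairs_digraph_infinite_chromatic_and_no_bad_odd_cycle :
    (∀ (C : Type) [Finite C] (col : IncompPair → C),
      ∃ q ∈ incompEdges, col q.1 = col q.2) ∧
    ¬ ∃ (n : ℕ) (v : Fin (n+1) → IncompPair)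
        (es : Fin n → IncompPair × IncompPair) (d : Fin n → Bool),
        Odd n ∧
        v (Fin.last n) = v 0 ∧
        (∀ i : Fin n, es i ∈ incompEdges) ∧
        (∀ i : Fin n, if d i = true then es i = (v i.castSucc, v i.succ)
          else es i = (v i.succ, v i.castSucc)) ∧
        (∀ i : Fin n, i.1 % 2 = 1 → d i = true) := by
  constructor
  · -- Part (i): infinite chromatic number
    intro C _ col
    classical
    let c : ℕ → ℕ → ℕ → C := fun i j k => col (vertD i j k)
    let S : ℕ → ℕ → Set C := fun i j => {x | ∃ k, j < k ∧ x = c i j k}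
    let T : ℕ → Set (Set C) := fun i => {s | ∃ j, i < j ∧ s = S i j}
    obtain ⟨a, b, hab, hT⟩ := Finite.exists_ne_map_eq_of_infinite T
    -- wlog a < b
    obtain ⟨i, j, hij, hTij⟩ : ∃ i j, i < j ∧ T i = T j := by
      rcases lt_or_gt_of_ne hab with h | h
      · exact ⟨a, b, h, hT⟩
      · exact ⟨b, a, h, hT.symm⟩
    have h1 : S i j ∈ T i := ⟨j, hij, rfl⟩
    rw [hTij] at h1
    obtain ⟨k, hjk, hS⟩ := h1
    have h2 : c i j k ∈ S i j := ⟨k, hjk, rfl⟩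
    rw [hS] at h2
    obtain ⟨l, hkl, hc⟩ := h2
    refine ⟨(vertD i j k, vertD j k l), ?_, hc⟩
    rw [vertD_eq hij hjk, vertD_eq hjk hkl]
    exact ⟨rfl, Aset_ssubset hij hjk hkl⟩
  · -- Part (ii): no bad odd cycle
    rintro ⟨n, v, es, d, hodd, hcyc, hE, hD, hfwd⟩
    obtain ⟨m, hm⟩ := hodd
    -- any edge gives X_i ⊆ Y_{i+1}
    have hA : ∀ i : Fin n, (v i.castSucc).val.1 ⊆ (v i.succ).val.2 := by
      intro i
      have hE' := hE i
      have hD' := hD i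
      cases hd : d i with
      | true =>
        rw [hd] at hD'
        rw [if_pos rfl] at hD'
        rw [hD'] at hE'
        exact hE'.2.subset
      | false =>
        rw [hd] at hD'
        rw [if_neg (by simp)] at hD'
        rw [hD'] at hE'
        exact le_of_eq hE'.1.symm
    -- odd-indexed (forward) edges give Y_i = X_{i+1}
    have hB : ∀ i : Fin n, i.1 % 2 = 1 → (v i.castSucc).val.2 = (v i.succ).val.1 := by
      intro i hi
      have hE' := hE i
      have hD' := hD i
      rw [hfwd i hi] at hD'
      rw [if_pos rfl] at hD'
      rw [hD'] at hE'
      exact hE'.1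
    have key : ∀ t : ℕ, ∀ h : 2*t < n,
        (v 0).val.1 ⊆ (v ⟨2*t, by omega⟩).val.1 := by
      intro t
      induction t with
      | zero =>
        intro h
        have h0 : (⟨2*0, by omega⟩ : Fin (n+1)) = 0 := by
          apply Fin.ext; simp
        rw [h0]
      | succ t ih =>
        intro h
        have ht : 2*t < n := by omega
        have ht1 : 2*t+1 < n := by omega
        have step1 := hA ⟨2*t, ht⟩
        have step2 := hB ⟨2*t+1, ht1⟩ (by simp)
        simp only [Fin.castSucc_mk, Fin.succ_mk] at step1 step2
        have goal_eq : (⟨2*(t+1), by omega⟩ : Fin (n+1)) = ⟨2*t+1+1, by omega⟩ := by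
          apply Fin.ext; simp; omega
        rw [goal_eq]
        exact ((ih ht).trans step1).trans (le_of_eq step2)
    -- conclude
    have hmn : 2*m < n := by omega
    have last_step := hA ⟨2*m, hmn⟩
    simp only [Fin.castSucc_mk, Fin.succ_mk] at last_step
    have e2 : (⟨2*m+1, by omega⟩ : Fin (n+1)) = Fin.last n := by
      apply Fin.ext; simp [hm]
    rw [e2, hcyc] at last_step
    exact (v 0).prop.1 ((key m hmn).trans last_step)
end

section
/- Let n ≥ 2 be an integer, let u : ℚ → ℚ be monotone increasing (x ≤ y implies u(x) ≤ u(y)), and let a₁, …, aₙ, b ∈ ℚ satisfy: a_{i+1} < a_i + 1 for all 1 ≤ i ≤ n−1; a₁ < aₙ − (n−2); u(a_i) < a_i for all 1 ≤ i ≤ n; and b + 1 < u(b). Then b ∉ [a₁ − 1, aₙ], i.e., either b < a₁ − 1 or b > aₙ. -/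
/-- Let `n ≥ 2`, let `u : ℚ → ℚ` be monotone increasing,
and let `a₁, …, aₙ, b ∈ ℚ` satisfy `a_{i+1} < a_i + 1` for `1 ≤ i ≤ n-1`,
`a₁ < aₙ - (n-2)`, `u(a_i) < a_i` for all `1 ≤ i ≤ n`, and `b + 1 < u(b)`.
Then `b ∉ [a₁ - 1, aₙ]`. -/
theorem gadget_b_not_in_interval
    (n : ℕ) (hn : 2 ≤ n) (u : ℚ → ℚ) (hu : Monotone u)
    (a : ℕ → ℚ) (b : ℚ)
    (h1 : ∀ i : ℕ, 1 ≤ i → i ≤ n - 1 → a (i + 1) < a i + 1)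
    (h2 : a 1 < a n - ((n : ℚ) - 2))
    (h3 : ∀ i : ℕ, 1 ≤ i → i ≤ n → u (a i) < a i)
    (h4 : b + 1 < u b) :
    b ∉ Set.Icc (a 1 - 1) (a n) := by
  rintro ⟨hb1, hb2⟩
  have key : ∀ i, 1 ≤ i → i ≤ n → a i < b := by
    intro i
    induction i with
    | zero => intro h; omega
    | succ k ih =>
      intro _ hin
      rcases Nat.eq_zero_or_pos k with hk | hk
      · subst hk
        by_contra h
        push_neg at h
        have := hu h
        have h3' := h3 1 le_rfl (by omega)
        linarith
      · have hk' : a k < b := ih hk (by omega)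
        have h1' := h1 k hk (by omega)
        by_contra h
        push_neg at h
        have := hu h
        have h3' := h3 (k + 1) (by omega) hin
        linarith
  have := key n (by omega) le_rfl
  linarith
end
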